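/- arXiv:1603.04107 — 2 statements merged into one kernel-verified Lean document; each statement's English description precedes it below -/
import Mathlib

section
/- Let a, b < 1 be real numbers and let (W_n), (X_n) be real sequences with X_0 = W_0 = 0 satisfying X_n = W_n + a·M_n + b·m_n for all n ≥ 0, where M_n = max_{k≤n} X_k and m_n = min_{k≤n} X_k. Then m_n = (1/(1−b)) · min_{k≤n} (W_k + (a/(1−a)) G_k), where G_k = max_{l≤k} (W_l + b·m_l). -/
open Finset

/-- Running maximum `max_{k ≤ n} x_k`. -/
noncomputable def runMax (x : ℕ → ℝ) (n : ℕ) : ℝ :=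
  (range (n + 1)).sup' nonempty_range_add_one x

/-- Running minimum `min_{k ≤ n} x_k`. -/
noncomputable def runMin (x : ℕ → ℝ) (n : ℕ) : ℝ :=
  (range (n + 1)).inf' nonempty_range_add_one x

/-!
Writing `X_k = V_k + a M_k` with `V_k = W_k + b m_k`, the running maximum of `V_k = X_k - a M_k`
is `(1 - a) M_n`: every term is at most `(1 - a) M_k ≤ (1 - a) M_n`, and the bound is attained at
the index where `X` reaches `M_n`. Hence `G_k = (1 - a) M_k`, so `W_k + (a/(1-a)) G_k = X_k - b m_k`,
and the mirror-image statement for running minima gives `min_{k ≤ n} (X_k - b m_k) = (1 - b) m_n`.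
-/

section RunningExtrema

variable (x : ℕ → ℝ)

lemma le_runMax {k n : ℕ} (h : k ≤ n) : x k ≤ runMax x n :=
  le_sup' x (mem_range_succ_iff.2 h)

lemma runMax_mono {k n : ℕ} (h : k ≤ n) : runMax x k ≤ runMax x n :=
  sup'_mono x (range_subset_range.2 (Nat.succ_le_succ h)) _

lemma exists_le_eq_runMax (n : ℕ) : ∃ k ≤ n, x k = runMax x n := by
  obtain ⟨k, hk, hmax⟩ := exists_mem_eq_sup' nonempty_range_add_one x
  exact ⟨k, mem_range_succ_iff.1 hk, hmax.symm⟩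

lemma runMin_eq_neg_runMax_neg (n : ℕ) : runMin x n = -runMax (fun k => -x k) n := by
  apply le_antisymm
  · refine le_neg.2 (sup'_le _ _ fun k hk => neg_le_neg ?_)
    exact inf'_le x hk
  · exact le_inf' _ _ fun k hk => neg_le.1 (le_sup' (fun k => -x k) hk)

lemma runMax_sub_mul_runMax {a : ℝ} (ha : a ≤ 1) (n : ℕ) :
    runMax (fun k => x k - a * runMax x k) n = (1 - a) * runMax x n := by
  have h1a : 0 ≤ 1 - a := sub_nonneg.2 ha
  apply le_antisymm
  · refine sup'_le _ _ fun k hk => ?_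
    have hkn : k ≤ n := mem_range_succ_iff.1 hk
    calc x k - a * runMax x k ≤ (1 - a) * runMax x k := by linarith [le_runMax x (le_refl k)]
      _ ≤ (1 - a) * runMax x n := mul_le_mul_of_nonneg_left (runMax_mono x hkn) h1a
  · obtain ⟨k, hkn, hk⟩ := exists_le_eq_runMax x n
    have hMk : runMax x k = runMax x n :=
      le_antisymm (runMax_mono x hkn) (hk ▸ le_runMax x le_rfl)
    calc (1 - a) * runMax x n = x k - a * runMax x k := by rw [hMk, hk]; ring
      _ ≤ _ := le_runMax (fun k => x k - a * runMax x k) hkn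

lemma runMin_sub_mul_runMin {b : ℝ} (hb : b ≤ 1) (n : ℕ) :
    runMin (fun k => x k - b * runMin x k) n = (1 - b) * runMin x n := by
  have hneg : (fun k => -(x k - b * runMin x k)) =
      fun k => -x k - b * runMax (fun l => -x l) k := by
    funext k
    rw [runMin_eq_neg_runMax_neg x k]
    ring
  rw [runMin_eq_neg_runMax_neg, hneg, runMax_sub_mul_runMax _ hb, runMin_eq_neg_runMax_neg x n]
  ring

end RunningExtrema

theorem runMin_eq_of_perturbed_general (a b : ℝ) (ha : a < 1) (hb : b < 1) (W X : ℕ → ℝ)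
    (hXn : ∀ n, X n = W n + a * runMax X n + b * runMin X n) (n : ℕ) :
    runMin X n = (1 / (1 - b)) *
      runMin (fun k => W k + (a / (1 - a)) *
        runMax (fun l => W l + b * runMin X l) k) n := by
  have hG : ∀ k, runMax (fun l => W l + b * runMin X l) k = (1 - a) * runMax X k := by
    intro k
    rw [← runMax_sub_mul_runMax X ha.le k]
    congr 1
    funext l
    linarith [hXn l]
  have hinner : (fun k => W k + (a / (1 - a)) * runMax (fun l => W l + b * runMin X l) k) =
      fun k => X k - b * runMin X k := by
    funext k
    rw [hG k, hXn k]
    field_simp [(sub_pos.2 ha).ne']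
    ring
  rw [hinner, runMin_sub_mul_runMin X hb.le n]
  field_simp [(sub_pos.2 hb).ne']

/-- if `X_n = W_n + a M_n + b m_n` with `a, b < 1`, then
`m_n = (1/(1−b)) · min_{k≤n} (W_k + (a/(1−a)) G_k)` where
`G_k = max_{l≤k}(W_l + b m_l)`. -/
theorem runMin_eq_of_perturbed (a b : ℝ) (ha : a < 1) (hb : b < 1) (W X : ℕ → ℝ)
    (hX0 : X 0 = 0) (hW0 : W 0 = 0)
    (hXn : ∀ n, X n = W n + a * runMax X n + b * runMin X n) (n : ℕ) :
    runMin X n = (1 / (1 - b)) *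
      runMin (fun k => W k + (a / (1 - a)) *
        runMax (fun l => W l + b * runMin X l) k) n :=
  runMin_eq_of_perturbed_general a b ha hb W X hXn n
end

section
/- Let (X_n) be the p-rotor walk on ℤ with parameter p ∈ (0,1) and (α,β)-random initial configuration, with martingale part Y_n = Σ_{k=0}^{n−1}(Δ_k − E[Δ_k|F_k]) where Δ_k = X_{k+1} − X_k. Then for all n ≥ 1, X_n = W_n + a·M_n + b·m_n, where a = α(2p−1)/p, b = β(2p−1)/p, and W_n = (Y_{n+1} − Δ_n)/(2p). -/
open MeasureTheory ProbabilityTheory Finset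

/-- One step of the p-rotor walk dynamics: given the current rotor configuration
and position `s = (ρ, x)` and the outcome `b ∈ {−1,+1}` of the coin (`b = 1`
means the rotor is broken and fails to flip), the rotor at `x` becomes
`b · ρ(x)` and the walker moves one step in the direction of the new rotor. -/
def rotorStep (s : (ℤ → ℤ) × ℤ) (b : ℤ) : (ℤ → ℤ) × ℤ :=
  let ρ' := Function.update s.1 s.2 (b * s.1 s.2)
  (ρ', s.2 + ρ' s.2)

/-- The state (rotor configuration, position) of the p-rotor walk after `n`
steps, started at `0` with initial rotors `ρ0` and coin outcomes `b`. -/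
def rotorState (ρ0 : ℤ → ℤ) (b : ℕ → ℤ) : ℕ → (ℤ → ℤ) × ℤ
  | 0 => (ρ0, 0)
  | n + 1 => rotorStep (rotorState ρ0 b n) (b n)

/-- The position of the p-rotor walk after `n` steps. -/
def rotorWalk (ρ0 : ℤ → ℤ) (b : ℕ → ℤ) (n : ℕ) : ℤ := (rotorState ρ0 b n).2

/-- Running maximum `max_{k ≤ n} x_k` of an integer sequence. -/
def runMaxZ (x : ℕ → ℤ) (n : ℕ) : ℤ :=
  (range (n + 1)).sup' nonempty_range_add_one x

/-- Running minimum `min_{k ≤ n} x_k` of an integer sequence. -/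
def runMinZ (x : ℕ → ℤ) (n : ℕ) : ℤ :=
  (range (n + 1)).inf' nonempty_range_add_one x

/-!
Write `Δ_k = B_k R_k`, where `R_k` is the rotor the walker finds at `X_k`. When `X_k` was visited
before, the rotor there points back to `X_{k-1}` (it points towards the side where the walk
currently is), so `R_k` is `F_k`-measurable, while `B_k` is independent of `F_k`. On a first visit
`R_k` is the initial rotor at `X_k`, and the event `(X_0, …, X_k) = (x_0, …, x_k)` depends only on
the coins and initial rotors used before, so it is independent of `(B_k, ρ0 x_k)`. Hence
`E[Δ_k | F_k] = (2p - 1) c_k` with `c_k = X_{k-1} - X_k` on revisits and `c_k = 2α - 1` or `1 - 2β`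
on first visits to positive or negative sites. First visits are exactly new maxima and minima, so
`∑_{k ≤ n} c_k = 2α M_n + 2β m_n - X_n`, and the decomposition is
`Y_{n+1} = X_{n+1} - (2p - 1) ∑ c_k` rearranged.
-/

def IsNearestNeighborPath (x : ℕ → ℤ) : Prop :=
  ∀ i, x (i + 1) - x i = 1 ∨ x (i + 1) - x i = -1

open Classical in
/-- The rotor that a rotor walk with initial rotors `r` following the path `x` finds at `x k` at
time `k` (see `rotorState_fst_rotorWalk`). -/
noncomputable def rotorOnArrival {R : Type*} [IntCast R] (r : ℤ → R) (x : ℕ → ℤ) (k : ℕ) : R :=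
  if ∃ j < k, x j = x k then ((x (k - 1) - x k : ℤ) : R) else r (x k)

section RotorOnArrival

variable {R : Type*} [IntCast R] {r r' : ℤ → R} {x x' : ℕ → ℤ} {k : ℕ}

lemma rotorOnArrival_of_exists (h : ∃ j < k, x j = x k) :
    rotorOnArrival r x k = ((x (k - 1) - x k : ℤ) : R) := by
  simp only [rotorOnArrival, if_pos h]

lemma rotorOnArrival_of_forall_ne (h : ∀ j < k, x j ≠ x k) :
    rotorOnArrival r x k = r (x k) := by
  have h' : ¬∃ j < k, x j = x k := fun ⟨j, hj, he⟩ => h j hj he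
  simp only [rotorOnArrival, if_neg h']

lemma rotorOnArrival_congr (hx : ∀ j ≤ k, x j = x' j) (hr : r (x k) = r' (x k)) :
    rotorOnArrival r x k = rotorOnArrival r' x' k := by
  by_cases h : ∃ j < k, x j = x k
  · obtain ⟨j, hjk, hj⟩ := h
    have h' : ∃ j < k, x' j = x' k := ⟨j, hjk, by rw [← hx j hjk.le, ← hx k le_rfl, hj]⟩
    rw [rotorOnArrival_of_exists ⟨j, hjk, hj⟩, rotorOnArrival_of_exists h', hx k le_rfl,
      hx (k - 1) (Nat.sub_le k 1)]
  · push Not at h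
    have h' : ∀ j < k, x' j ≠ x' k := fun j hj => by
      rw [← hx j hj.le, ← hx k le_rfl]; exact h j hj
    rw [rotorOnArrival_of_forall_ne h, rotorOnArrival_of_forall_ne h', hr, hx k le_rfl]

lemma intCast_rotorOnArrival (r : ℤ → ℤ) (x : ℕ → ℤ) (k : ℕ) :
    ((rotorOnArrival r x k : ℤ) : ℝ) = rotorOnArrival (fun y => (r y : ℝ)) x k := by
  unfold rotorOnArrival
  split_ifs <;> rfl

end RotorOnArrival

section RotorWalk

variable {ρ0 : ℤ → ℤ} {b : ℕ → ℤ}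

lemma rotorState_succ_fst (n : ℕ) :
    (rotorState ρ0 b (n + 1)).1 = Function.update (rotorState ρ0 b n).1 (rotorWalk ρ0 b n)
      (b n * (rotorState ρ0 b n).1 (rotorWalk ρ0 b n)) := rfl

lemma rotorWalk_succ_eq_add_rotorState (n : ℕ) :
    rotorWalk ρ0 b (n + 1) = rotorWalk ρ0 b n + (rotorState ρ0 b (n + 1)).1 (rotorWalk ρ0 b n) :=
  rfl

lemma rotorWalk_succ_eq_add_mul (n : ℕ) :
    rotorWalk ρ0 b (n + 1) = rotorWalk ρ0 b n + b n * (rotorState ρ0 b n).1 (rotorWalk ρ0 b n) := by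
  rw [rotorWalk_succ_eq_add_rotorState, rotorState_succ_fst, Function.update_self]

lemma rotorState_fst_eq_one_or (hρ : ∀ y, ρ0 y = 1 ∨ ρ0 y = -1) (hb : ∀ n, b n = 1 ∨ b n = -1)
    (n : ℕ) (y : ℤ) : (rotorState ρ0 b n).1 y = 1 ∨ (rotorState ρ0 b n).1 y = -1 := by
  induction n generalizing y with
  | zero => exact hρ y
  | succ n ih =>
    rw [rotorState_succ_fst, Function.update_apply]
    split_ifs with h
    · rcases hb n with hbn | hbn <;> rcases ih (rotorWalk ρ0 b n) with hr | hr <;> simp [hbn, hr]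
    · exact ih y

lemma isNearestNeighborPath_rotorWalk (hρ : ∀ y, ρ0 y = 1 ∨ ρ0 y = -1)
    (hb : ∀ n, b n = 1 ∨ b n = -1) : IsNearestNeighborPath (rotorWalk ρ0 b) := fun n => by
  rw [rotorWalk_succ_eq_add_rotorState, add_sub_cancel_left]
  exact rotorState_fst_eq_one_or hρ hb (n + 1) _

lemma rotorState_fst_of_forall_ne {y : ℤ} {n : ℕ} (h : ∀ j < n, rotorWalk ρ0 b j ≠ y) :
    (rotorState ρ0 b n).1 y = ρ0 y := by
  induction n with
  | zero => rfl
  | succ n ih =>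
    rw [rotorState_succ_fst, Function.update_of_ne (h n n.lt_succ_self).symm]
    exact ih fun j hj => h j (hj.trans n.lt_succ_self)

/-- Once a site has been left, its rotor points to the side of the site on which the walk
currently is; `x (n - 1) + x n - 2 y` has that sign also when the walk is back at `y`. -/
lemma rotorState_fst_mul_pos (hρ : ∀ y, ρ0 y = 1 ∨ ρ0 y = -1) (hb : ∀ n, b n = 1 ∨ b n = -1)
    {y : ℤ} {n : ℕ} (h : ∃ j < n, rotorWalk ρ0 b j = y) :
    0 < (rotorState ρ0 b n).1 y * (rotorWalk ρ0 b (n - 1) + rotorWalk ρ0 b n - 2 * y) := by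
  have hstep := isNearestNeighborPath_rotorWalk hρ hb
  induction n with
  | zero => obtain ⟨j, hj, -⟩ := h; omega
  | succ n ih =>
    rw [Nat.add_sub_cancel, rotorState_succ_fst, Function.update_apply]
    split_ifs with hy
    · subst hy
      have hd := hstep n
      rw [rotorWalk_succ_eq_add_mul] at hd ⊢
      rw [add_sub_cancel_left] at hd
      rcases hd with hd | hd <;> rw [hd] <;> omega
    · obtain ⟨j, hj, rfl⟩ := h
      have hjn : j < n := lt_of_le_of_ne (Nat.lt_succ_iff.1 hj) fun he => hy (he ▸ rfl)
      obtain ⟨m, rfl⟩ : ∃ m, n = m + 1 := ⟨n - 1, by omega⟩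
      have hpos := ih ⟨j, hjn, rfl⟩
      rw [Nat.add_sub_cancel] at hpos
      rcases rotorState_fst_eq_one_or hρ hb (m + 1) (rotorWalk ρ0 b j) with hr | hr <;>
        rw [hr] at hpos ⊢ <;> rcases hstep m with hs | hs <;>
          rcases hstep (m + 1) with hs' | hs' <;> omega

lemma rotorState_fst_rotorWalk (hρ : ∀ y, ρ0 y = 1 ∨ ρ0 y = -1) (hb : ∀ n, b n = 1 ∨ b n = -1)
    (n : ℕ) : (rotorState ρ0 b n).1 (rotorWalk ρ0 b n) = rotorOnArrival ρ0 (rotorWalk ρ0 b) n := by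
  by_cases h : ∃ j < n, rotorWalk ρ0 b j = rotorWalk ρ0 b n
  · obtain ⟨j, hj, -⟩ := id h
    have hpos := rotorState_fst_mul_pos hρ hb h
    have hstep := isNearestNeighborPath_rotorWalk hρ hb (n - 1)
    rw [Nat.sub_add_cancel (by omega : 1 ≤ n)] at hstep
    rw [rotorOnArrival_of_exists h, Int.cast_id]
    rcases rotorState_fst_eq_one_or hρ hb n (rotorWalk ρ0 b n) with hr | hr <;>
      rw [hr] at hpos ⊢ <;> omega
  · push Not at h
    rw [rotorOnArrival_of_forall_ne h, rotorState_fst_of_forall_ne h]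

theorem rotorWalk_succ (hρ : ∀ y, ρ0 y = 1 ∨ ρ0 y = -1) (hb : ∀ n, b n = 1 ∨ b n = -1) (n : ℕ) :
    rotorWalk ρ0 b (n + 1) = rotorWalk ρ0 b n + b n * rotorOnArrival ρ0 (rotorWalk ρ0 b) n := by
  rw [rotorWalk_succ_eq_add_mul, rotorState_fst_rotorWalk hρ hb]

theorem rotorWalk_congr {ρ0' : ℤ → ℤ} {b' : ℕ → ℤ} (hρ : ∀ y, ρ0 y = 1 ∨ ρ0 y = -1)
    (hb : ∀ n, b n = 1 ∨ b n = -1) (hρ' : ∀ y, ρ0' y = 1 ∨ ρ0' y = -1)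
    (hb' : ∀ n, b' n = 1 ∨ b' n = -1) {k : ℕ} (hbk : ∀ j < k, b j = b' j)
    (hρk : ∀ j < k, ρ0 (rotorWalk ρ0 b j) = ρ0' (rotorWalk ρ0 b j)) :
    ∀ j ≤ k, rotorWalk ρ0 b j = rotorWalk ρ0' b' j := by
  suffices ∀ j ≤ k, ∀ i ≤ j, rotorWalk ρ0 b i = rotorWalk ρ0' b' i from
    fun j hj => this j hj j le_rfl
  intro j hj
  induction j with
  | zero => intro i hi; rw [Nat.le_zero.1 hi]; rfl
  | succ j ih =>
    have ih := ih (by omega)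
    intro i hi
    rcases Nat.lt_or_eq_of_le hi with hi | rfl
    · exact ih i (by omega)
    rw [rotorWalk_succ hρ hb, rotorWalk_succ hρ' hb', rotorOnArrival_congr ih (hρk j (by omega)),
      ih j le_rfl, hbk j (by omega)]

end RotorWalk

section RunningExtrema

variable {x : ℕ → ℤ}

lemma runMaxZ_zero (x : ℕ → ℤ) : runMaxZ x 0 = x 0 := by simp [runMaxZ]

lemma runMinZ_zero (x : ℕ → ℤ) : runMinZ x 0 = x 0 := by simp [runMinZ]

lemma runMaxZ_succ (x : ℕ → ℤ) (n : ℕ) : runMaxZ x (n + 1) = max (runMaxZ x n) (x (n + 1)) := by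
  simp only [runMaxZ, range_add_one (n := n + 1)]
  exact (sup'_insert ..).trans (max_comm ..)

lemma runMinZ_succ (x : ℕ → ℤ) (n : ℕ) : runMinZ x (n + 1) = min (runMinZ x n) (x (n + 1)) := by
  simp only [runMinZ, range_add_one (n := n + 1)]
  exact (inf'_insert ..).trans (min_comm ..)

lemma le_runMaxZ (x : ℕ → ℤ) {k n : ℕ} (h : k ≤ n) : x k ≤ runMaxZ x n :=
  le_sup' x (mem_range.2 (Nat.lt_succ_of_le h))

lemma runMinZ_le (x : ℕ → ℤ) {k n : ℕ} (h : k ≤ n) : runMinZ x n ≤ x k :=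
  inf'_le x (mem_range.2 (Nat.lt_succ_of_le h))

lemma IsNearestNeighborPath.exists_eq_of_runMinZ_le_of_le_runMaxZ (hx : IsNearestNeighborPath x)
    {n : ℕ} {y : ℤ} (hmin : runMinZ x n ≤ y) (hmax : y ≤ runMaxZ x n) : ∃ j ≤ n, x j = y := by
  induction n with
  | zero => exact ⟨0, le_rfl, le_antisymm (runMinZ_zero x ▸ hmin) (runMaxZ_zero x ▸ hmax)⟩
  | succ n ih =>
    rw [runMinZ_succ] at hmin
    rw [runMaxZ_succ] at hmax
    by_cases hy : runMinZ x n ≤ y ∧ y ≤ runMaxZ x n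
    · obtain ⟨j, hj, hjy⟩ := ih hy.1 hy.2
      exact ⟨j, hj.trans n.le_succ, hjy⟩
    · refine ⟨n + 1, le_rfl, ?_⟩
      have := le_runMaxZ x (le_refl n)
      have := runMinZ_le x (le_refl n)
      rcases hx n with h | h <;> omega

end RunningExtrema

def initialRotorMean (α β : ℝ) (y : ℤ) : ℝ :=
  if 0 < y then 2 * α - 1 else if y < 0 then 1 - 2 * β else 0

/-- The increments of `2 α M_n + 2 β m_n - x_n` are the conditional means of the rotors met
along the way: a revisit undoes the last step, a new maximum (minimum) meets a fresh rotor on the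
positive (negative) side. -/
theorem IsNearestNeighborPath.sum_rotorOnArrival_initialRotorMean {x : ℕ → ℤ}
    (hx : IsNearestNeighborPath x) (h0 : x 0 = 0) (α β : ℝ) (n : ℕ) :
    ∑ k ∈ range (n + 1), rotorOnArrival (initialRotorMean α β) x k =
      2 * α * runMaxZ x n + 2 * β * runMinZ x n - x n := by
  induction n with
  | zero =>
    rw [sum_range_one, rotorOnArrival_of_forall_ne (fun j hj => absurd hj j.not_lt_zero),
      runMaxZ_zero, runMinZ_zero, h0]
    simp [initialRotorMean]
  | succ n ih =>
    rw [sum_range_succ, ih, runMaxZ_succ, runMinZ_succ]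
    have hM := le_runMaxZ x (le_refl n)
    have hm := runMinZ_le x (le_refl n)
    have hM0 : 0 ≤ runMaxZ x n := h0 ▸ le_runMaxZ x n.zero_le
    have hm0 : runMinZ x n ≤ 0 := h0 ▸ runMinZ_le x n.zero_le
    by_cases hrev : ∃ j < n + 1, x j = x (n + 1)
    · obtain ⟨j, hj, hjx⟩ := hrev
      rw [rotorOnArrival_of_exists ⟨j, hj, hjx⟩, Nat.add_sub_cancel,
        max_eq_left (hjx ▸ le_runMaxZ x (Nat.lt_succ_iff.1 hj)),
        min_eq_left (hjx ▸ runMinZ_le x (Nat.lt_succ_iff.1 hj))]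
      push_cast
      ring
    · push Not at hrev
      have hnew : runMaxZ x n < x (n + 1) ∨ x (n + 1) < runMinZ x n := by
        by_contra! h
        obtain ⟨j, hj, hjx⟩ := hx.exists_eq_of_runMinZ_le_of_le_runMaxZ h.2 h.1
        exact hrev j (Nat.lt_succ_of_le hj) hjx
      rw [rotorOnArrival_of_forall_ne hrev, initialRotorMean]
      rcases hx n with hs | hs
      · have hxn : x n = runMaxZ x n := by omega
        have hxn1 : x (n + 1) = runMaxZ x n + 1 := by omega
        rw [max_eq_right (by omega), min_eq_left (by omega), if_pos (by omega), hxn1, hxn]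
        push_cast
        ring
      · have hxn : x n = runMinZ x n := by omega
        have hxn1 : x (n + 1) = runMinZ x n - 1 := by omega
        rw [max_eq_left (by omega), min_eq_right (by omega), if_neg (by omega), if_pos (by omega),
          hxn1, hxn]
        push_cast
        ring

lemma IsNearestNeighborPath.abs_rotorOnArrival_initialRotorMean_le_one {x : ℕ → ℤ}
    (hx : IsNearestNeighborPath x) {α β : ℝ} (hα : α ∈ Set.Icc (0 : ℝ) 1)
    (hβ : β ∈ Set.Icc (0 : ℝ) 1) (k : ℕ) : |rotorOnArrival (initialRotorMean α β) x k| ≤ 1 := by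
  by_cases hrev : ∃ j < k, x j = x k
  · obtain ⟨j, hj, -⟩ := id hrev
    have hstep := hx (k - 1)
    rw [Nat.sub_add_cancel (by omega : 1 ≤ k)] at hstep
    rw [rotorOnArrival_of_exists hrev]
    rcases hstep with h | h <;> rw [show x (k - 1) - x k = -(x k - x (k - 1)) by ring, h] <;> simp
  · push Not at hrev
    rw [rotorOnArrival_of_forall_ne hrev, initialRotorMean, abs_le]
    obtain ⟨hα0, hα1⟩ := hα
    obtain ⟨hβ0, hβ1⟩ := hβ
    split_ifs <;> constructor <;> linarith

section Conditioning

variable {Ω V W : Type*} [MeasurableSpace V] [Countable V] [MeasurableSingletonClass V]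
  {t : Ω → V}

lemma measurableSet_comap_of_factorsThrough {A : Set Ω} (h : Function.FactorsThrough (· ∈ A) t) :
    MeasurableSet[MeasurableSpace.comap t ‹_›] A :=
  ⟨t '' A, (Set.to_countable _).measurableSet, Set.Subset.antisymm
    (fun _ ⟨_, hω', he⟩ => cast (h he) hω') (Set.subset_preimage_image t A)⟩

lemma Function.FactorsThrough.measurable_comap [MeasurableSpace W] {g : Ω → W}
    (h : Function.FactorsThrough g t) : Measurable[MeasurableSpace.comap t ‹_›] g :=
  fun _ _ => measurableSet_comap_of_factorsThrough fun _ _ he => by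
    simp only [Set.mem_preimage, h he]

lemma iSup_comap_eq_comap_pi {ι : Type*} [MeasurableSpace W] (X : ι → Ω → W) (s : Finset ι) :
    ⨆ i ∈ s, MeasurableSpace.comap (X i) ‹_› =
      MeasurableSpace.comap (fun ω (i : s) => X i ω) MeasurableSpace.pi := by
  simp_rw [MeasurableSpace.pi, MeasurableSpace.comap_iSup, MeasurableSpace.comap_comp]
  exact iSup_subtype'

variable [MeasurableSpace Ω] {μ : Measure Ω}

theorem condExp_comap_ae_eq_of_setIntegral_fiber [IsFiniteMeasure μ] (ht : Measurable t)
    {f g : Ω → ℝ} (hf : Integrable f μ) (hg : Integrable g μ) (hgt : Function.FactorsThrough g t)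
    (hfiber : ∀ ω₀, ∫ ω in t ⁻¹' {t ω₀}, f ω ∂μ = μ.real (t ⁻¹' {t ω₀}) * g ω₀) :
    μ[f | MeasurableSpace.comap t ‹_›] =ᵐ[μ] g := by
  have hfiber_eq : ∀ w, ∫ ω in t ⁻¹' {w}, g ω ∂μ = ∫ ω in t ⁻¹' {w}, f ω ∂μ := by
    intro w
    by_cases hw : w ∈ Set.range t
    · obtain ⟨ω₀, rfl⟩ := hw
      rw [hfiber, setIntegral_congr_fun (ht (measurableSet_singleton _)) fun ω hω => hgt hω,
        setIntegral_const, smul_eq_mul]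
    · simp [Set.preimage_singleton_eq_empty.2 hw]
  refine (ae_eq_condExp_of_forall_setIntegral_eq ht.comap_le hf (fun _ _ _ => hg.integrableOn) ?_
    hgt.measurable_comap.stronglyMeasurable.aestronglyMeasurable).symm
  rintro _ ⟨S, -, rfl⟩ -
  have hdisj : Pairwise (Function.onFun Disjoint fun w : S => t ⁻¹' {(w : V)}) := fun w w' hne =>
    (Set.disjoint_singleton.2 (Subtype.coe_injective.ne hne)).preimage t
  have hmeas : ∀ w : S, MeasurableSet (t ⁻¹' {(w : V)}) := fun _ => ht (measurableSet_singleton _)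
  rw [← Set.biUnion_preimage_singleton, Set.biUnion_eq_iUnion,
    integral_iUnion hmeas hdisj hg.integrableOn, integral_iUnion hmeas hdisj hf.integrableOn]
  exact tsum_congr fun w => hfiber_eq w

lemma ProbabilityTheory.iIndepFun.setIntegral_comp_eq_mul {ι : Type*} {f : ι → Ω → V}
    (hf : iIndepFun f μ) (hmeas : ∀ i, Measurable (f i)) {S T : Finset ι} (hST : Disjoint S T)
    {A : Set Ω} (hA : Function.FactorsThrough (· ∈ A) fun ω (i : S) => f i ω) (g : (T → V) → ℝ) :
    ∫ ω in A, g (fun i => f i ω) ∂μ = μ.real A * ∫ ω, g (fun i => f i ω) ∂μ :=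
  Indep.setIntegral_eq_mul (measurable_pi_lambda (fun ω (i : S) => f i ω) fun i => hmeas i).comap_le
    (hf.indepFun_finset S T hST hmeas)
    (measurable_pi_lambda (fun ω (i : T) => f i ω) fun i => hmeas i).aemeasurable
    (measurableSet_comap_of_factorsThrough hA) (measurable_of_countable g).aestronglyMeasurable

variable [IsProbabilityMeasure μ]

lemma integral_intCast_of_eq_one_or {g : Ω → ℤ} (hg : Measurable g)
    (hval : ∀ ω, g ω = 1 ∨ g ω = -1) {q : ℝ} (hq : 0 ≤ q) (hlaw : μ {ω | g ω = 1} = .ofReal q) :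
    ∫ ω, (g ω : ℝ) ∂μ = 2 * q - 1 := by
  have hset : MeasurableSet {ω | g ω = 1} := hg (measurableSet_singleton 1)
  have hpt : ∀ ω, (g ω : ℝ) = 2 * {ω | g ω = 1}.indicator 1 ω - 1 := fun ω => by
    rcases hval ω with h | h <;> norm_num [h, Set.indicator]
  simp_rw [hpt]
  have hind : Integrable ({ω | g ω = 1}.indicator (1 : Ω → ℝ)) μ :=
    (integrable_indicator_iff hset).2 (integrable_const 1).integrableOn
  rw [integral_sub (hind.const_mul 2) (integrable_const 1), integral_const_mul,
    integral_indicator_one hset, measureReal_def, hlaw, ENNReal.toReal_ofReal hq]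
  simp

end Conditioning

structure IsPRotorModel {Ω : Type*} [MeasurableSpace Ω] (μ : Measure Ω) (p α β : ℝ)
    (B : ℕ → Ω → ℤ) (ρ0 : Ω → ℤ → ℤ) : Prop where
  p_mem : p ∈ Set.Ioo (0 : ℝ) 1
  α_mem : α ∈ Set.Icc (0 : ℝ) 1
  β_mem : β ∈ Set.Icc (0 : ℝ) 1
  measurable_coin : ∀ n, Measurable (B n)
  measurable_rotor : ∀ x, Measurable fun ω => ρ0 ω x
  coin_eq : ∀ n ω, B n ω = 1 ∨ B n ω = -1
  coin_law : ∀ n, μ {ω | B n ω = 1} = ENNReal.ofReal p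
  rotor_eq : ∀ x ω, ρ0 ω x = 1 ∨ ρ0 ω x = -1
  rotor_law_pos : ∀ x : ℤ, 0 < x → μ {ω | ρ0 ω x = 1} = ENNReal.ofReal α
  rotor_law_neg : ∀ x : ℤ, x < 0 → μ {ω | ρ0 ω x = -1} = ENNReal.ofReal β
  rotor_law_zero : μ {ω | ρ0 ω 0 = 1} = 1 / 2
  indep : iIndepFun (Sum.elim B (fun x ω => ρ0 ω x) : ℕ ⊕ ℤ → Ω → ℤ) μ

def rotorProcess {Ω : Type*} (B : ℕ → Ω → ℤ) (ρ0 : Ω → ℤ → ℤ) (n : ℕ) (ω : Ω) : ℤ :=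
  rotorWalk (ρ0 ω) (fun k => B k ω) n

lemma rotorProcess_zero {Ω : Type*} (B : ℕ → Ω → ℤ) (ρ0 : Ω → ℤ → ℤ) (ω : Ω) :
    rotorProcess B ρ0 0 ω = 0 :=
  rfl

/-- The indices, in the coordinates `Sum.elim B (fun x ω => ρ0 ω x)`, of the coins tossed and of the
initial rotors at the sites visited by `x` before time `k`. -/
def pastCoordinates (x : ℕ → ℤ) (k : ℕ) : Finset (ℕ ⊕ ℤ) :=
  (range k).image Sum.inl ∪ (range k).image (Sum.inr ∘ x)

namespace IsPRotorModel

variable {Ω : Type*} [MeasurableSpace Ω] {μ : Measure Ω} {p α β : ℝ} {B : ℕ → Ω → ℤ}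
  {ρ0 : Ω → ℤ → ℤ}

lemma isNearestNeighborPath (h : IsPRotorModel μ p α β B ρ0) (ω : Ω) :
    IsNearestNeighborPath fun n => rotorProcess B ρ0 n ω :=
  isNearestNeighborPath_rotorWalk (fun y => h.rotor_eq y ω) (fun n => h.coin_eq n ω)

lemma rotorProcess_succ (h : IsPRotorModel μ p α β B ρ0) (n : ℕ) (ω : Ω) :
    rotorProcess B ρ0 (n + 1) ω = rotorProcess B ρ0 n ω +
      B n ω * rotorOnArrival (ρ0 ω) (fun j => rotorProcess B ρ0 j ω) n :=
  rotorWalk_succ (fun y => h.rotor_eq y ω) (fun n => h.coin_eq n ω) n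

lemma measurable_rotorState (h : IsPRotorModel μ p α β B ρ0) (n : ℕ) :
    Measurable (rotorProcess B ρ0 n) ∧
      ∀ y, Measurable fun ω => (rotorState (ρ0 ω) (fun k => B k ω) n).1 y := by
  induction n with
  | zero => exact ⟨measurable_const, h.measurable_rotor⟩
  | succ n ih =>
    obtain ⟨hx, hρ⟩ := ih
    have hread : Measurable fun ω =>
        (rotorState (ρ0 ω) (fun k => B k ω) n).1 (rotorProcess B ρ0 n ω) :=
      (measurable_from_prod_countable_left (f := fun q : Ω × ℤ =>
        (rotorState (ρ0 q.1) (fun k => B k q.1) n).1 q.2) hρ).comp (measurable_id.prodMk hx)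
    have hnew := (h.measurable_coin n).mul hread
    refine ⟨?_, fun y => ?_⟩
    · convert hx.add hnew using 1
      exact funext fun ω => rotorWalk_succ_eq_add_mul n
    · simp only [rotorState_succ_fst, Function.update_apply]
      exact Measurable.ite (measurableSet_eq_fun measurable_const hx) hnew (hρ y)

lemma measurable_rotorProcess (h : IsPRotorModel μ p α β B ρ0) (n : ℕ) :
    Measurable (rotorProcess B ρ0 n) :=
  (h.measurable_rotorState n).1

lemma rotorProcess_eq_of_pastCoordinates (h : IsPRotorModel μ p α β B ρ0) {x : ℕ → ℤ} {k : ℕ}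
    {ω ω' : Ω} (hω : ∀ j ≤ k, rotorProcess B ρ0 j ω = x j)
    (hagree : ∀ i ∈ pastCoordinates x k,
      Sum.elim B (fun y ω => ρ0 ω y) i ω = Sum.elim B (fun y ω => ρ0 ω y) i ω') :
    ∀ j ≤ k, rotorProcess B ρ0 j ω' = x j := by
  have hcongr := rotorWalk_congr (fun y => h.rotor_eq y ω) (fun n => h.coin_eq n ω)
    (fun y => h.rotor_eq y ω') (fun n => h.coin_eq n ω') (k := k)
    (fun j hj => hagree (.inl j) (mem_union_left _ (mem_image_of_mem _ (mem_range.2 hj))))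
    (fun j hj => by
      rw [show rotorWalk _ _ j = x j from hω j hj.le]
      exact hagree (.inr (x j)) (mem_union_right _ (mem_image_of_mem _ (mem_range.2 hj))))
  exact fun j hj => (hcongr j hj).symm.trans (hω j hj)

lemma factorsThrough_pastCoordinates (h : IsPRotorModel μ p α β B ρ0) (x : ℕ → ℤ) (k : ℕ) :
    Function.FactorsThrough (· ∈ {ω | ∀ j ≤ k, rotorProcess B ρ0 j ω = x j})
      fun ω (i : pastCoordinates x k) => Sum.elim B (fun y ω => ρ0 ω y) i ω :=
  fun _ _ he => propext
    ⟨fun hω => h.rotorProcess_eq_of_pastCoordinates hω fun i hi => congrFun he ⟨i, hi⟩,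
      fun hω => h.rotorProcess_eq_of_pastCoordinates hω fun i hi => (congrFun he ⟨i, hi⟩).symm⟩

variable [IsProbabilityMeasure μ]

lemma integral_coin (h : IsPRotorModel μ p α β B ρ0) (n : ℕ) :
    ∫ ω, (B n ω : ℝ) ∂μ = 2 * p - 1 :=
  integral_intCast_of_eq_one_or (h.measurable_coin n) (h.coin_eq n) h.p_mem.1.le (h.coin_law n)

lemma integral_rotor (h : IsPRotorModel μ p α β B ρ0) (y : ℤ) :
    ∫ ω, (ρ0 ω y : ℝ) ∂μ = initialRotorMean α β y := by
  rcases lt_trichotomy y 0 with hy | rfl | hy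
  · have hneg : ∫ ω, ((-ρ0 ω y : ℤ) : ℝ) ∂μ = 2 * β - 1 :=
      integral_intCast_of_eq_one_or (g := fun ω => -ρ0 ω y) (h.measurable_rotor y).neg
        (fun ω => (h.rotor_eq y ω).symm.imp (by omega) (by omega)) h.β_mem.1
        (by simpa [neg_eq_iff_eq_neg] using h.rotor_law_neg y hy)
    push_cast at hneg
    rw [integral_neg] at hneg
    rw [initialRotorMean, if_neg hy.not_gt, if_pos hy]
    linarith
  · rw [integral_intCast_of_eq_one_or (h.measurable_rotor 0) (h.rotor_eq 0)
      (by norm_num : (0 : ℝ) ≤ 1 / 2) (by rw [h.rotor_law_zero, ENNReal.ofReal_div_of_pos two_pos,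
        ENNReal.ofReal_one, ENNReal.ofReal_ofNat])]
    simp [initialRotorMean]
  · rw [integral_intCast_of_eq_one_or (h.measurable_rotor y) (h.rotor_eq y) h.α_mem.1
      (h.rotor_law_pos y hy), initialRotorMean, if_pos hy]

lemma setIntegral_increment (h : IsPRotorModel μ p α β B ρ0) (k : ℕ) (x : ℕ → ℤ) :
    ∫ ω in {ω | ∀ j ≤ k, rotorProcess B ρ0 j ω = x j},
        ((rotorProcess B ρ0 (k + 1) ω - rotorProcess B ρ0 k ω : ℤ) : ℝ) ∂μ =
      μ.real {ω | ∀ j ≤ k, rotorProcess B ρ0 j ω = x j} *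
        ((2 * p - 1) * rotorOnArrival (initialRotorMean α β) x k) := by
  set A := {ω | ∀ j ≤ k, rotorProcess B ρ0 j ω = x j}
  have hmeas : ∀ i, Measurable (Sum.elim B (fun y ω => ρ0 ω y) i) :=
    Sum.rec h.measurable_coin h.measurable_rotor
  have hA := h.factorsThrough_pastCoordinates x k
  have hAmeas : MeasurableSet A := (measurable_pi_lambda (fun ω (i : pastCoordinates x k) =>
    Sum.elim B (fun y ω => ρ0 ω y) i ω) fun i => hmeas i).comap_le _
    (measurableSet_comap_of_factorsThrough hA)
  have hincr : ∀ ω ∈ A, ((rotorProcess B ρ0 (k + 1) ω - rotorProcess B ρ0 k ω : ℤ) : ℝ) =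
      B k ω * rotorOnArrival (fun y => (ρ0 ω y : ℝ)) x k := fun ω hω => by
    rw [h.rotorProcess_succ, add_sub_cancel_left, Int.cast_mul, intCast_rotorOnArrival,
      rotorOnArrival_congr hω rfl]
  rw [setIntegral_congr_fun hAmeas hincr]
  have hkpast : Sum.inl k ∉ pastCoordinates x k := by simp [pastCoordinates]
  by_cases hrev : ∃ j < k, x j = x k
  · simp_rw [rotorOnArrival_of_exists hrev]
    calc ∫ ω in A, (B k ω : ℝ) * ((x (k - 1) - x k : ℤ) : ℝ) ∂μ
        = μ.real A * ∫ ω, (B k ω : ℝ) * ((x (k - 1) - x k : ℤ) : ℝ) ∂μ :=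
          h.indep.setIntegral_comp_eq_mul hmeas (disjoint_singleton_right.2 hkpast) hA
            fun v => (v ⟨.inl k, mem_singleton_self _⟩ : ℝ) * ((x (k - 1) - x k : ℤ) : ℝ)
      _ = _ := by rw [integral_mul_const, h.integral_coin]
  · push Not at hrev
    simp_rw [rotorOnArrival_of_forall_ne hrev]
    have hT : Disjoint (pastCoordinates x k) {.inl k, .inr (x k)} := by
      rw [disjoint_insert_right, disjoint_singleton_right]
      refine ⟨hkpast, ?_⟩
      simpa [pastCoordinates] using hrev
    have hind : IndepFun (B k) (fun ω => ρ0 ω (x k)) μ :=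
      h.indep.indepFun (i := .inl k) (j := .inr (x k)) Sum.inl_ne_inr
    calc ∫ ω in A, (B k ω : ℝ) * (ρ0 ω (x k) : ℝ) ∂μ
        = μ.real A * ∫ ω, (B k ω : ℝ) * (ρ0 ω (x k) : ℝ) ∂μ :=
          h.indep.setIntegral_comp_eq_mul hmeas hT hA fun v =>
            (v ⟨.inl k, by simp⟩ : ℝ) * (v ⟨.inr (x k), by simp⟩ : ℝ)
      _ = _ := by
        rw [hind.integral_fun_comp_mul_comp (h.measurable_coin k).aemeasurable
          (h.measurable_rotor _).aemeasurable (measurable_of_countable _).aestronglyMeasurable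
          (measurable_of_countable _).aestronglyMeasurable, h.integral_coin, h.integral_rotor]

theorem condExp_increment (h : IsPRotorModel μ p α β B ρ0) (k : ℕ) :
    μ[fun ω => ((rotorProcess B ρ0 (k + 1) ω - rotorProcess B ρ0 k ω : ℤ) : ℝ) |
        ⨆ j ∈ range (k + 1), MeasurableSpace.comap (rotorProcess B ρ0 j) ⊤] =ᵐ[μ]
      fun ω => (2 * p - 1) * rotorOnArrival (initialRotorMean α β)
        (fun j => rotorProcess B ρ0 j ω) k := by
  set t := fun ω (j : range (k + 1)) => rotorProcess B ρ0 j ω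
  have ht : Measurable t := measurable_pi_lambda _ fun j => h.measurable_rotorProcess j
  have hgt : Function.FactorsThrough (fun ω => (2 * p - 1) *
      rotorOnArrival (initialRotorMean α β) (fun j => rotorProcess B ρ0 j ω) k) t :=
    fun ω ω' he => congrArg _ (rotorOnArrival_congr
      (fun j hj => congrFun he ⟨j, mem_range.2 (Nat.lt_succ_of_le hj)⟩) rfl)
  refine iSup_comap_eq_comap_pi (rotorProcess B ρ0) (range (k + 1)) ▸
    condExp_comap_ae_eq_of_setIntegral_fiber ht ?_ ?_ hgt fun ω₀ => ?_
  · refine .of_bound ((measurable_of_countable _).comp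
      ((h.measurable_rotorProcess _).sub (h.measurable_rotorProcess _))).aestronglyMeasurable 1
      (ae_of_all _ fun ω => ?_)
    rcases h.isNearestNeighborPath ω k with hs | hs <;> simp [hs]
  · refine .of_bound (hgt.measurable_comap.mono ht.comap_le le_rfl).aestronglyMeasurable 1
      (ae_of_all _ fun ω => ?_)
    obtain ⟨hp0, hp1⟩ := h.p_mem
    rw [Real.norm_eq_abs, abs_mul]
    exact mul_le_one₀ (abs_le.2 ⟨by linarith, by linarith⟩) (abs_nonneg _)
      ((h.isNearestNeighborPath ω).abs_rotorOnArrival_initialRotorMean_le_one h.α_mem h.β_mem k)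
  · have hfiber : t ⁻¹' {t ω₀} = {ω | ∀ j ≤ k, rotorProcess B ρ0 j ω = rotorProcess B ρ0 j ω₀} := by
      ext ω
      simp [t, funext_iff]
    rw [hfiber]
    exact h.setIntegral_increment k _

end IsPRotorModel

/-- for the p-rotor walk with `(α,β)`-random initial configuration,
with martingale part `Y_n = Σ_{k<n}(Δ_k − E[Δ_k|F_k])`, one has a.s.
`X_n = W_n + a M_n + b m_n` for all `n ≥ 1`, where `a = α(2p−1)/p`,
`b = β(2p−1)/p` and `W_n = (Y_{n+1} − Δ_n)/(2p)`. -/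
theorem rotorWalk_decomposition {Ω : Type*} [m0 : MeasurableSpace Ω] (μ : Measure Ω)
    [IsProbabilityMeasure μ] (p α β : ℝ) (hp : p ∈ Set.Ioo (0 : ℝ) 1)
    (hα : α ∈ Set.Icc (0 : ℝ) 1) (hβ : β ∈ Set.Icc (0 : ℝ) 1)
    (B : ℕ → Ω → ℤ) (ρ0 : Ω → ℤ → ℤ)
    (hBmeas : ∀ n, Measurable (B n)) (hρmeas : ∀ x, Measurable fun ω => ρ0 ω x)
    (hBval : ∀ n ω, B n ω = 1 ∨ B n ω = -1)
    (hBlaw : ∀ n, μ {ω | B n ω = 1} = ENNReal.ofReal p)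
    (hρval : ∀ x ω, ρ0 ω x = 1 ∨ ρ0 ω x = -1)
    (hρpos : ∀ x : ℤ, 0 < x → μ {ω | ρ0 ω x = 1} = ENNReal.ofReal α)
    (hρneg : ∀ x : ℤ, x < 0 → μ {ω | ρ0 ω x = -1} = ENNReal.ofReal β)
    (hρzero : μ {ω | ρ0 ω 0 = 1} = 1 / 2)
    (hindep : iIndepFun
      (Sum.elim B (fun x ω => ρ0 ω x) : ℕ ⊕ ℤ → Ω → ℤ) μ)
    -- the walk, its natural filtration, the increments and the martingale part
    (X : ℕ → Ω → ℤ) (hX : ∀ n ω, X n ω = rotorWalk (ρ0 ω) (fun k => B k ω) n)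
    (F : ℕ → MeasurableSpace Ω)
    (hFdef : ∀ n, F n = ⨆ k ∈ range (n + 1), MeasurableSpace.comap (X k) ⊤)
    (Δ : ℕ → Ω → ℝ) (hΔ : ∀ k ω, Δ k ω = ((X (k + 1) ω - X k ω : ℤ) : ℝ))
    (Y : ℕ → Ω → ℝ)
    (hY : ∀ n ω, Y n ω = ∑ k ∈ range n, (Δ k ω - (μ[Δ k | F k]) ω)) :
    ∀ n : ℕ, 1 ≤ n → ∀ᵐ ω ∂μ,
      ((X n ω : ℤ) : ℝ) = (Y (n + 1) ω - Δ n ω) / (2 * p) +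
        (α * (2 * p - 1) / p) * ((runMaxZ (fun k => X k ω) n : ℤ) : ℝ) +
        (β * (2 * p - 1) / p) * ((runMinZ (fun k => X k ω) n : ℤ) : ℝ) := by
  intro n _
  have hmodel : IsPRotorModel μ p α β B ρ0 :=
    ⟨hp, hα, hβ, hBmeas, hρmeas, hBval, hBlaw, hρval, hρpos, hρneg, hρzero, hindep⟩
  obtain rfl : X = rotorProcess B ρ0 := funext fun n => funext (hX n)
  obtain rfl : F = fun k => ⨆ j ∈ range (k + 1), MeasurableSpace.comap (rotorProcess B ρ0 j) ⊤ :=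
    funext hFdef
  obtain rfl : Δ = fun k ω => ((rotorProcess B ρ0 (k + 1) ω - rotorProcess B ρ0 k ω : ℤ) : ℝ) :=
    funext fun k => funext (hΔ k)
  filter_upwards [ae_all_iff.2 hmodel.condExp_increment] with ω hω
  have hY' : Y (n + 1) ω = ∑ k ∈ range (n + 1),
      (((rotorProcess B ρ0 (k + 1) ω : ℝ) - rotorProcess B ρ0 k ω) - (2 * p - 1) *
        rotorOnArrival (initialRotorMean α β) (fun j => rotorProcess B ρ0 j ω) k) := by
    rw [hY]
    refine sum_congr rfl fun k _ => ?_
    rw [hω k]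
    push_cast
    rfl
  rw [hY', sum_sub_distrib, sum_range_sub (fun k => (rotorProcess B ρ0 k ω : ℝ)), ← mul_sum,
    (hmodel.isNearestNeighborPath ω).sum_rotorOnArrival_initialRotorMean rfl,
    rotorProcess_zero]
  have hp0 : p ≠ 0 := hp.1.ne'
  field_simp
  push_cast
  ring
end
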